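/- arXiv:2104.15036 — 4 statements merged into one kernel-verified Lean document; each statement's English description precedes it below -/
import Mathlib

section
/- Let f : ℝ^d → ℝ be C-semi-concave (for every x there exists l ∈ ℝ^d with f(y) - f(x) ≤ l·(y-x) + C|y-x|² for all y). Suppose at a point x where f is differentiable there exists C' > 0 such that f(y) - f(x) - ∇f(x)·(y-x) ≥ -C'|y-x|² for all y ∈ ℝ^d. Then for every y and every super-gradient l_y of f at y, one has |l_y - ∇f(x)| ≤ (4C' + 2C)|y - x|. -/
/-!
Chaining the lower quadratic bound at `x`, the upper bound with `g` at `x` evaluated at `y`, and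
the upper bound with `l_y` at `y` gives `⟪g - l_y, z - y⟫ ≤ C'‖z - x‖² + C‖y - x‖² + C‖z - y‖²`
for every `z`. Testing this at the point `z` at distance `‖y - x‖` from `y` in the direction of
`g - l_y` yields the bound; when `y = x` it says that `g - l_y` is a linear functional dominated by
a quadratic, hence zero.
-/

open scoped RealInnerProductSpace

section InnerProductSpace

variable {E : Type*} [NormedAddCommGroup E] [InnerProductSpace ℝ E]

theorem eq_zero_of_forall_inner_le_mul_norm_sq {v : E} {A : ℝ}
    (h : ∀ w, ⟪v, w⟫ ≤ A * ‖w‖ ^ 2) : v = 0 := by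
  set ε := 1 / (|A| + 1) with hε
  have hε_pos : 0 < ε := by positivity
  have hAε : A * ε < 1 := by
    rw [hε, mul_one_div, div_lt_one (by positivity)]
    linarith [le_abs_self A]
  have hv := h (ε • v)
  rw [real_inner_smul_right, real_inner_self_eq_norm_sq, norm_smul, Real.norm_of_nonneg hε_pos.le,
    mul_pow] at hv
  have : ε * (1 - A * ε) * ‖v‖ ^ 2 ≤ 0 := by nlinarith
  have hsq : ‖v‖ ^ 2 ≤ 0 :=
    nonpos_of_mul_nonpos_right this (mul_pos hε_pos (by linarith))
  exact norm_eq_zero.mp (pow_eq_zero_iff two_ne_zero |>.mp (le_antisymm hsq (sq_nonneg _)))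

theorem exists_norm_eq_and_inner_eq_norm_mul_norm (u v : E) :
    ∃ w : E, ‖w‖ = ‖u‖ ∧ ⟪v, w⟫ = ‖v‖ * ‖u‖ := by
  rcases eq_or_ne v 0 with rfl | hv
  · exact ⟨u, rfl, by simp⟩
  · have hv' : ‖v‖ ≠ 0 := norm_ne_zero_iff.mpr hv
    refine ⟨(‖u‖ / ‖v‖) • v, ?_, ?_⟩
    · rw [norm_smul, Real.norm_of_nonneg (by positivity), div_mul_cancel₀ _ hv']
    · rw [real_inner_smul_right, real_inner_self_eq_norm_sq]
      field_simp

theorem norm_le_of_forall_inner_le {v u : E} {C C' : ℝ} (hC' : 0 ≤ C')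
    (h : ∀ w, ⟪v, w⟫ ≤ C' * ‖w + u‖ ^ 2 + C * ‖u‖ ^ 2 + C * ‖w‖ ^ 2) :
    ‖v‖ ≤ (4 * C' + 2 * C) * ‖u‖ := by
  rcases eq_or_ne u 0 with rfl | hu
  · have hv : v = 0 := eq_zero_of_forall_inner_le_mul_norm_sq (A := C' + C) fun w => by
      simpa [add_mul] using h w
    simp [hv]
  · have hu_pos : 0 < ‖u‖ := norm_pos_iff.mpr hu
    obtain ⟨w, hw, hvw⟩ := exists_norm_eq_and_inner_eq_norm_mul_norm u v
    have hwu : ‖w + u‖ ≤ 2 * ‖u‖ := by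
      linarith [norm_add_le w u]
    have hwu_sq : ‖w + u‖ ^ 2 ≤ (2 * ‖u‖) ^ 2 := pow_le_pow_left₀ (norm_nonneg _) hwu 2
    have key : ‖v‖ * ‖u‖ ≤ (4 * C' + 2 * C) * ‖u‖ * ‖u‖ := by
      have := h w
      rw [hvw, hw] at this
      nlinarith [mul_le_mul_of_nonneg_left hwu_sq hC']
    exact le_of_mul_le_mul_right key hu_pos

theorem inner_sub_supergradient_le {f : E → ℝ} {C C' : ℝ} {x y g ly : E}
    (hg : f y - f x ≤ ⟪g, y - x⟫ + C * ‖y - x‖ ^ 2)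
    (hlow : ∀ z, f z - f x - ⟪g, z - x⟫ ≥ -C' * ‖z - x‖ ^ 2)
    (hly : ∀ z, f z - f y ≤ ⟪ly, z - y⟫ + C * ‖z - y‖ ^ 2) (z : E) :
    ⟪g - ly, z - y⟫ ≤ C' * ‖z - x‖ ^ 2 + C * ‖y - x‖ ^ 2 + C * ‖z - y‖ ^ 2 := by
  have hsplit : ⟪g, z - x⟫ = ⟪g, z - y⟫ + ⟪g, y - x⟫ := by
    rw [← inner_add_right, sub_add_sub_cancel]
  rw [inner_sub_left]
  linarith [hlow z, hly z]

end InnerProductSpace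

theorem stmt0_general {d : ℕ} (C C' : ℝ) (hC' : 0 < C')
    (f : EuclideanSpace ℝ (Fin d) → ℝ)
    (x g : EuclideanSpace ℝ (Fin d))
    (hg : ∀ y, f y - f x ≤ ⟪g, y - x⟫ + C * ‖y - x‖ ^ 2)
    (hlow : ∀ y, f y - f x - ⟪g, y - x⟫ ≥ -C' * ‖y - x‖ ^ 2) :
    ∀ y ly, (∀ z, f z - f y ≤ ⟪ly, z - y⟫ + C * ‖z - y‖ ^ 2) →
      ‖ly - g‖ ≤ (4 * C' + 2 * C) * ‖y - x‖ := by
  intro y ly hly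
  rw [norm_sub_rev]
  refine norm_le_of_forall_inner_le hC'.le fun w => ?_
  simpa only [add_sub_cancel_right, add_sub_assoc] using
    inner_sub_supergradient_le (hg y) hlow hly (w + y)

theorem stmt0 {d : ℕ} (C C' : ℝ) (hC' : 0 < C')
    (f : EuclideanSpace ℝ (Fin d) → ℝ)
    (hsc : ∀ x, ∃ l, ∀ y, f y - f x ≤ ⟪l, y - x⟫ + C * ‖y - x‖ ^ 2)
    (x g : EuclideanSpace ℝ (Fin d))
    (hg : ∀ y, f y - f x ≤ ⟪g, y - x⟫ + C * ‖y - x‖ ^ 2)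
    (hlow : ∀ y, f y - f x - ⟪g, y - x⟫ ≥ -C' * ‖y - x‖ ^ 2) :
    ∀ y ly, (∀ z, f z - f y ≤ ⟪ly, z - y⟫ + C * ‖z - y‖ ^ 2) →
      ‖ly - g‖ ≤ (4 * C' + 2 * C) * ‖y - x‖ :=
  stmt0_general C C' hC' f x g hg hlow
end

section
/- Let M be a symmetric positive definite d×d real matrix. Then the matrix equation S² + SM − M = 0 in symmetric matrices S is solved by S^± = ½(−M ± √(M² + 4M)), where √ denotes the positive symmetric square root of the positive definite matrix M² + 4M. Moreover S^+ = ½(−M + √(M²+4M)) is positive definite, S^+ commutes with M, and (I + M + S^+)(I + M + S^-) = I. -/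
/-- The square root of a positive semidefinite matrix, as defined in Mathlib of December 2024
(`Matrix.PosSemidef.sqrt`, since removed). -/
noncomputable def Matrix.PosSemidef.sqrt {n 𝕜 : Type*} [Fintype n] [RCLike 𝕜] [PartialOrder 𝕜] [DecidableEq n]
    {A : Matrix n n 𝕜} (hA : A.PosSemidef) : Matrix n n 𝕜 :=
  hA.1.eigenvectorUnitary.1 * Matrix.diagonal ((↑) ∘ (√·) ∘ hA.1.eigenvalues) *
  (star hA.1.eigenvectorUnitary : Matrix n n 𝕜)

/-!
The square root `R = √(M² + 4M)` is a function of `M` under the functional calculus, namely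
`R = g(M)` with `g x = √(x² + 4x)`. Hence `R` commutes with `M` and `R² = M² + 4M`, so `S±`
are the two roots of the quadratic formula and every identity reduces to a computation with
commuting variables. Positivity of `S⁺ = (g(M) - M)/2` holds because `x < √(x² + 4x)`
for `x > 0`.
-/

open Matrix
open scoped MatrixOrder

section CommuteQuadratic

variable {K A : Type*} [Field K] [CharZero K] [Ring A] [Algebra K A] {m r : A}

theorem sq_add_mul_sub_eq_zero_of_sq_eq (hc : Commute r m) (hr : r ^ 2 = m ^ 2 + (4 : K) • m) :
    ((1/2 : K) • (-m + r)) ^ 2 + (1/2 : K) • (-m + r) * m - m = 0 := by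
  simp only [sq, smul_mul_assoc, mul_smul_comm, add_mul, mul_add, neg_mul, mul_neg, hc.eq] at hr ⊢
  rw [hr]
  module

theorem one_add_add_smul_mul_one_add_add_smul_eq_one (hc : Commute r m)
    (hr : r ^ 2 = m ^ 2 + (4 : K) • m) :
    (1 + m + (1/2 : K) • (-m + r)) * (1 + m + (1/2 : K) • (-m - r)) = 1 := by
  simp only [sq, smul_mul_assoc, mul_smul_comm, add_mul, mul_add, mul_sub, neg_mul, mul_neg,
    one_mul, mul_one, hc.eq] at hr ⊢
  rw [hr]
  module

end CommuteQuadratic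

section CFC

variable {A : Type*} [Ring A] [StarRing A] [Algebra ℝ A] [TopologicalSpace A]
  [ContinuousFunctionalCalculus ℝ A IsSelfAdjoint] {a : A}

theorem cfc_sqrt_sq_add_smul [ContinuousMap.UniqueHom ℝ A] (ha : IsSelfAdjoint a) :
    cfc Real.sqrt (a ^ 2 + (4 : ℝ) • a) = cfc (fun x => √(x ^ 2 + 4 * x)) a := by
  have hpoly : a ^ 2 + (4 : ℝ) • a = cfc (fun x : ℝ => x ^ 2 + 4 * x) a := by
    rw [cfc_add .., cfc_pow_id .., cfc_const_mul_id ..]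
  rw [hpoly, ← cfc_comp' ..]

variable [PartialOrder A] [StarOrderedRing A] [NonnegSpectrumClass ℝ A]

theorem sq_cfc_sqrt_sq_add_mul (ha : 0 ≤ a) :
    cfc (fun x => √(x ^ 2 + 4 * x)) a ^ 2 = a ^ 2 + (4 : ℝ) • a := by
  have hspec := (StarOrderedRing.nonneg_iff_spectrum_nonneg (R := ℝ) a).mp ha
  calc cfc (fun x => √(x ^ 2 + 4 * x)) a ^ 2
      = cfc (fun x => √(x ^ 2 + 4 * x) ^ 2) a := (cfc_pow ..).symm
    _ = cfc (fun x : ℝ => x ^ 2 + 4 * x) a :=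
      cfc_congr fun x hx => Real.sq_sqrt (by have := hspec x hx; positivity)
    _ = a ^ 2 + (4 : ℝ) • a := by rw [cfc_add .., cfc_pow_id .., cfc_const_mul_id ..]

theorem isStrictlyPositive_smul_neg_add_cfc_sqrt (ha : IsStrictlyPositive a) :
    IsStrictlyPositive ((1/2 : ℝ) • (-a + cfc (fun x => √(x ^ 2 + 4 * x)) a)) := by
  have hcfc : (1/2 : ℝ) • (-a + cfc (fun x => √(x ^ 2 + 4 * x)) a)
      = cfc (fun x => 1/2 * (-x + √(x ^ 2 + 4 * x))) a := by
    rw [cfc_const_mul .., cfc_add .., cfc_neg_id ..]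
  rw [hcfc, cfc_isStrictlyPositive_iff ..]
  intro x hx
  have hx : 0 < x := ha.spectrum_pos hx
  have hlt : x < √(x ^ 2 + 4 * x) := Real.lt_sqrt_of_sq_lt (by nlinarith)
  linarith

end CFC

theorem Matrix.PosSemidef.sqrt_eq_cfc {n 𝕜 : Type*} [Fintype n] [RCLike 𝕜] [PartialOrder 𝕜]
    [DecidableEq n] {A : Matrix n n 𝕜} (hA : A.PosSemidef) : hA.sqrt = cfc Real.sqrt A := by
  rw [hA.1.cfc_eq]
  simp [Matrix.IsHermitian.cfc, Matrix.PosSemidef.sqrt, Unitary.conjStarAlgAut_apply,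
    Function.comp_def]

theorem stmt1 {d : ℕ} (M : Matrix (Fin d) (Fin d) ℝ)
    (hM : M.PosDef)
    (hP : (M ^ 2 + (4 : ℝ) • M).PosSemidef) :
    let R := hP.sqrt
    let Sp := (1/2 : ℝ) • (-M + R)
    let Sm := (1/2 : ℝ) • (-M - R)
    Sp.IsHermitian ∧ Sm.IsHermitian ∧
    Sp ^ 2 + Sp * M - M = 0 ∧ Sm ^ 2 + Sm * M - M = 0 ∧
    Sp.PosDef ∧ Sp * M = M * Sp ∧
    (1 + M + Sp) * (1 + M + Sm) = 1 := by
  intro R Sp Sm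
  have hR : R = cfc (fun x => √(x ^ 2 + 4 * x)) M :=
    hP.sqrt_eq_cfc.trans (cfc_sqrt_sq_add_smul hM.isHermitian)
  have hRsq : R ^ 2 = M ^ 2 + (4 : ℝ) • M := hR ▸ sq_cfc_sqrt_sq_add_mul hM.posSemidef.nonneg
  have hRM : Commute R M := by
    simpa only [hR, cfc_id ℝ M] using cfc_commute_cfc (fun x => √(x ^ 2 + 4 * x)) id M
  have hRsa : IsSelfAdjoint R := hR ▸ cfc_predicate _ M
  have hMsa : IsSelfAdjoint M := hM.isHermitian
  refine ⟨(IsSelfAdjoint.all _).smul (hMsa.neg.add hRsa),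
    (IsSelfAdjoint.all _).smul (hMsa.neg.sub hRsa),
    sq_add_mul_sub_eq_zero_of_sq_eq hRM hRsq, ?_, ?_, ?_,
    one_add_add_smul_mul_one_add_add_smul_eq_one hRM hRsq⟩
  · have hneg := sq_add_mul_sub_eq_zero_of_sq_eq hRM.neg_left (by rwa [neg_sq])
    rwa [← sub_eq_add_neg] at hneg
  · exact (hR ▸ isStrictlyPositive_smul_neg_add_cfc_sqrt hM.isStrictlyPositive).posDef
  · exact (((Commute.refl M).neg_left.add_left hRM).smul_left _).eq
end

section
/- Let D_n be the nd×nd block tridiagonal symmetric matrix with diagonal blocks A₁,…,A_n (each d×d) and off-diagonal blocks −I_d. Then det D_n equals the determinant of the top-left d×d block of the product of 2×2 block matrices [[A_n, −I_d],[I_d, 0]]·[[A_{n−1}, −I_d],[I_d, 0]]⋯[[A₁, −I_d],[I_d, 0]]. -/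
/-!
Write `c k := continuant a (k + 1)` for the block continuants, `c (k + 1) = a k * c k - c (k - 1)`;
the first block column of the product of the first `k` transfer matrices is `(c k, c (k - 1))`.
Each block row of `D` applied to the column `(c 0, …, c (n - 1))` is one instance of the
recurrence, so multiplying `D` on the right by the block unitriangular matrix with that first
column leaves a first block column that vanishes except for `c n` in the last row. Rotating the
block columns cyclically gives a block lower triangular matrix with diagonal blocks
`-1, …, -1, c n`, and the sign `(-1) ^ ((n - 1) * d)` of the rotation cancels `det (-1) ^ (n - 1)`.
-/

open Matrix

section Continuant

variable {K : Type*} [Ring K]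

-- Shifted by one so that `continuant a 0 = 0` makes the recurrence hold from the first row on.
def continuant (a : ℕ → K) : ℕ → K
  | 0 => 0
  | 1 => 1
  | k + 2 => a k * continuant a (k + 1) - continuant a k

def tridiag (a : ℕ → K) (n : ℕ) : Matrix (Fin n) (Fin n) K :=
  of fun i j => if (i : ℕ) = j then a i else if (i : ℕ) + 1 = j ∨ (j : ℕ) + 1 = i then -1 else 0

theorem sum_tridiag_mul_continuant (a : ℕ → K) {n : ℕ} (i : Fin n) :
    ∑ k : Fin n, tridiag a n i k * continuant a (k + 1) =
      if (i : ℕ) + 1 = n then continuant a (n + 1) else 0 := by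
  obtain ⟨i, hi⟩ := i
  have hsummand : ∀ k : ℕ, (if i = k then a i else if i + 1 = k ∨ k + 1 = i then -1 else 0) *
      continuant a (k + 1) = (if k = i then a i * continuant a (i + 1) else 0)
        - (if k = i + 1 then continuant a (i + 2) else 0)
        - (if k + 1 = i then continuant a i else 0) := by
    intro k
    split_ifs <;> first | omega | (subst_vars; simp)
  have hprev : ∑ k ∈ Finset.range n, (if k + 1 = i then continuant a i else 0) =
      continuant a i := by
    cases i with
    | zero => simp [continuant]
    | succ i => simp [Finset.sum_ite_eq', Nat.lt_of_succ_lt hi]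
  have hrec : a i * continuant a (i + 1) - continuant a i = continuant a (i + 2) := rfl
  simp only [tridiag, of_apply]
  rw [Fin.sum_univ_eq_sum_range (fun k => (if i = k then a i else
    if i + 1 = k ∨ k + 1 = i then -1 else 0) * continuant a (k + 1)), Finset.sum_congr rfl
    fun k _ => hsummand k, Finset.sum_sub_distrib, Finset.sum_sub_distrib, Finset.sum_ite_eq',
    Finset.sum_ite_eq', hprev, if_pos (Finset.mem_range.2 hi), sub_right_comm, hrec]
  by_cases hlast : i + 1 = n
  · subst hlast
    simp
  · simp [hlast, show i + 1 < n by omega]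

def continuantColumn (a : ℕ → K) (n : ℕ) : Matrix (Fin n) (Fin n) K :=
  of fun i j => if (j : ℕ) = 0 then continuant a (i + 1) else if i = j then 1 else 0

theorem blockTriangular_continuantColumn (a : ℕ → K) (n : ℕ) :
    (continuantColumn a n).BlockTriangular OrderDual.toDual := by
  intro i j hij
  have hij : i < j := hij
  simp [continuantColumn, hij.ne, show (j : ℕ) ≠ 0 by omega]

theorem continuantColumn_apply_self (a : ℕ → K) {n : ℕ} (i : Fin n) :
    continuantColumn a n i i = 1 := by
  by_cases hi : (i : ℕ) = 0 <;> simp [continuantColumn, hi, continuant]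

theorem tridiag_mul_continuantColumn_apply (a : ℕ → K) {n : ℕ} (i j : Fin n) :
    (tridiag a n * continuantColumn a n) i j =
      if (j : ℕ) = 0 then (if (i : ℕ) + 1 = n then continuant a (n + 1) else 0)
      else tridiag a n i j := by
  by_cases hj : (j : ℕ) = 0
  · simp only [mul_apply, continuantColumn, of_apply, hj, if_true, sum_tridiag_mul_continuant]
  · simp [mul_apply, continuantColumn, hj]

theorem blockTriangular_tridiag_mul_continuantColumn_submatrix_finRotate (a : ℕ → K) (n : ℕ) :
    ((tridiag a (n + 1) * continuantColumn a (n + 1)).submatrix id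
      (finRotate (n + 1))).BlockTriangular OrderDual.toDual := by
  intro i j hij
  have hij : (i : ℕ) < j := hij
  have hi : (i : ℕ) < n := by omega
  by_cases hj : j = Fin.last n
  · simp [tridiag_mul_continuantColumn_apply, hj, hi.ne]
  · have hrot : (finRotate (n + 1) j : ℕ) = j + 1 := coe_finRotate_of_ne_last hj
    rw [submatrix_apply, tridiag_mul_continuantColumn_apply, hrot, if_neg (Nat.succ_ne_zero _)]
    simp only [tridiag, of_apply, hrot, id]
    split_ifs <;> first | omega | rfl

theorem tridiag_mul_continuantColumn_submatrix_finRotate_apply_self (a : ℕ → K) {n : ℕ}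
    (i : Fin (n + 1)) :
    (tridiag a (n + 1) * continuantColumn a (n + 1)).submatrix id (finRotate (n + 1)) i i =
      if i = Fin.last n then continuant a (n + 2) else -1 := by
  by_cases hi : i = Fin.last n
  · simp [tridiag_mul_continuantColumn_apply, hi]
  · have hrot : (finRotate (n + 1) i : ℕ) = i + 1 := coe_finRotate_of_ne_last hi
    rw [submatrix_apply, tridiag_mul_continuantColumn_apply, hrot, if_neg (Nat.succ_ne_zero _)]
    simp only [tridiag, of_apply, hrot, id, if_neg hi]
    simp

end Continuant

section BlockDet

variable {ι m R : Type*} [Fintype ι] [DecidableEq ι] [Fintype m] [DecidableEq m] [CommRing R]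

theorem det_comp_of_blockTriangular {α : Type*} [LinearOrder α]
    {M : Matrix ι ι (Matrix m m R)} {b : ι → α} (hb : Function.Injective b)
    (h : M.BlockTriangular b) : (comp ι ι m m R M).det = ∏ i, (M i i).det := by
  rcases isEmpty_or_nonempty m with hm | hm
  · simp [det_isEmpty]
  have himage : Finset.univ.image (fun p : ι × m => b p.1) = Finset.univ.image b := by
    ext x
    simp only [Finset.mem_image, Finset.mem_univ, true_and, Prod.exists, exists_const]
  rw [h.comp.det, himage, Finset.prod_image hb.injOn]
  refine Finset.prod_congr rfl fun i _ => ?_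
  let e : {p : ι × m // b p.1 = b i} ≃ m :=
    { toFun := fun p => p.1.2
      invFun := fun k => ⟨(i, k), rfl⟩
      left_inv := fun ⟨⟨j, k⟩, hj⟩ => by
        obtain rfl : j = i := hb hj
        rfl
      right_inv := fun _ => rfl }
  rw [← det_submatrix_equiv_self e.symm]
  rfl

theorem sign_prodCongrLeft_finRotate (n : ℕ) :
    Equiv.Perm.sign (Equiv.prodCongrLeft fun _ : m => finRotate n) =
      (-1) ^ ((n - 1) * Fintype.card m) := by
  rw [Equiv.Perm.sign_prodCongrLeft, sign_finRotate, Finset.prod_const, Finset.card_univ, pow_mul]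

end BlockDet

section Tridiagonal

variable {m R : Type*} [Fintype m] [DecidableEq m] [CommRing R]

theorem det_comp_tridiag (a : ℕ → Matrix m m R) (n : ℕ) :
    (comp _ _ m m R (tridiag a n)).det = (continuant a (n + 1)).det := by
  cases n with
  | zero => simp [det_isEmpty, continuant]
  | succ n =>
    set T := tridiag a (n + 1)
    set L := continuantColumn a (n + 1)
    have hL : (comp _ _ m m R L).det = 1 := by
      rw [det_comp_of_blockTriangular OrderDual.toDual.injective
        (blockTriangular_continuantColumn a _)]
      simp [continuantColumn_apply_self]
    have hmul : comp _ _ m m R (T * L) = comp _ _ m m R T * comp _ _ m m R L :=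
      map_mul (compRingEquiv (Fin (n + 1)) m R) T L
    have hrotate : (comp _ _ m m R ((T * L).submatrix id (finRotate (n + 1)))).det =
        (-1) ^ (n * Fintype.card m) * (comp _ _ m m R T).det := by
      rw [show comp _ _ m m R ((T * L).submatrix id (finRotate (n + 1))) =
        (comp _ _ m m R (T * L)).submatrix id (Equiv.prodCongrLeft fun _ => finRotate (n + 1))
        from rfl, det_permute', sign_prodCongrLeft_finRotate, hmul, det_mul, hL, mul_one]
      simp
    have htriangular : (comp _ _ m m R ((T * L).submatrix id (finRotate (n + 1)))).det =
        (-1) ^ (n * Fintype.card m) * (continuant a (n + 2)).det := by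
      rw [det_comp_of_blockTriangular OrderDual.toDual.injective
        (blockTriangular_tridiag_mul_continuantColumn_submatrix_finRotate a n),
        Fin.prod_univ_castSucc]
      simp only [tridiag_mul_continuantColumn_submatrix_finRotate_apply_self,
        Fin.castSucc_ne_last, if_false, if_true, det_neg, det_one, mul_one, Finset.prod_const,
        Finset.card_univ, Fintype.card_fin, ← pow_mul, mul_comm n]
    exact (isUnit_neg_one.pow _).mul_left_cancel (hrotate.symm.trans htriangular)

def transferMatrix (x : Matrix m m R) : Matrix (m ⊕ m) (m ⊕ m) R :=
  fromBlocks x (-1) 1 0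

theorem toBlocks_prod_transferMatrix (a : ℕ → Matrix m m R) (n : ℕ) :
    ((List.range n).reverse.map fun k => transferMatrix (a k)).prod.toBlocks₁₁ =
        continuant a (n + 1) ∧
      ((List.range n).reverse.map fun k => transferMatrix (a k)).prod.toBlocks₂₁ =
        continuant a n := by
  induction n with
  | zero => simp [continuant, ← fromBlocks_one]
  | succ n ih =>
    rw [List.range_succ, List.reverse_append, List.reverse_singleton, List.singleton_append,
      List.map_cons, List.prod_cons]
    set P := ((List.range n).reverse.map fun k => transferMatrix (a k)).prod
    rw [transferMatrix, ← fromBlocks_toBlocks P, fromBlocks_multiply, ih.1, ih.2]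
    simp [continuant, sub_eq_add_neg]

end Tridiagonal

theorem stmt4 {d n : ℕ} (A : Fin n → Matrix (Fin d) (Fin d) ℝ) :
    let D : Matrix (Fin n × Fin d) (Fin n × Fin d) ℝ :=
      Matrix.of fun p q =>
        if p.1 = q.1 then A p.1 p.2 q.2
        else if (p.1 : ℕ) + 1 = (q.1 : ℕ) ∨ (q.1 : ℕ) + 1 = (p.1 : ℕ) then
          (-(1 : Matrix (Fin d) (Fin d) ℝ)) p.2 q.2
        else 0
    let Mprod : Matrix (Fin d ⊕ Fin d) (Fin d ⊕ Fin d) ℝ :=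
      (((List.finRange n).reverse.map fun i =>
        Matrix.fromBlocks (A i) (-1) 1 0).prod)
    D.det = (Matrix.toBlocks₁₁ Mprod).det := by
  intro D Mprod
  set a : ℕ → Matrix (Fin d) (Fin d) ℝ := fun k => if h : k < n then A ⟨k, h⟩ else 0
  have hA : ∀ i : Fin n, A i = a i := fun i => by simp [a]
  have hD : D = comp _ _ _ _ ℝ (tridiag a n) := by
    ext p q
    simp only [D, tridiag, comp_apply, of_apply, Fin.val_inj, hA]
    split_ifs <;> rfl
  have hM : Mprod = ((List.range n).reverse.map fun k => transferMatrix (a k)).prod := by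
    simp only [Mprod, transferMatrix, hA, ← List.map_coe_finRange_eq_range, ← List.map_reverse,
      List.map_map, Function.comp_def]
  rw [hD, hM, det_comp_tridiag, (toBlocks_prod_transferMatrix a n).1]
end

section
/- (Poincaré separation theorem) Let A be an n×n real symmetric matrix, let u₁,…,u_r be an orthonormal family in ℝ^n with r < n, and let B be the r×r matrix with entries B_{ij} = u_iᵀ A u_j. If λ₁(A) ≤ … ≤ λ_n(A) are the eigenvalues of A and λ₁(B) ≤ … ≤ λ_r(B) those of B, then λ_k(A) ≤ λ_k(B) ≤ λ_{k+n−r}(A) for all 1 ≤ k ≤ r. -/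
/-!
Min–max argument. Let `V y = U y`, an isometry with `⟪A (V y), V y⟫ = ⟪B y, y⟫`. The image under `V`
of the span of the `k + 1` lowest eigenvectors of `B` and the span of the `n - k` highest
eigenvectors of `A` have dimensions adding up to `n + 1`, so they share a vector `V y ≠ 0`; then
`λ_k(A) ‖y‖² ≤ ⟪A (V y), V y⟫ = ⟪B y, y⟫ ≤ λ_k(B) ‖y‖²`. The upper bound is the same argument with
the `r - k` highest eigenvectors of `B` and the `k + n - r + 1` lowest ones of `A`.
-/

open Matrix Finset Module Submodule
open scoped InnerProductSpace

section Rayleigh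

variable {ι E : Type*} [Fintype ι] [NormedAddCommGroup E] [InnerProductSpace ℝ E]
  (b : OrthonormalBasis ι ℝ E) {T : E →ₗ[ℝ] E} {μ : ι → ℝ}

theorem OrthonormalBasis.norm_sq_eq_sum_repr_sq (x : E) : ‖x‖ ^ 2 = ∑ i, b.repr x i ^ 2 := by
  rw [← b.repr.norm_map x, EuclideanSpace.norm_sq_eq]
  simp only [Real.norm_eq_abs, sq_abs]

theorem OrthonormalBasis.inner_map_self_eq_sum (hT : ∀ i, T (b i) = μ i • b i) (x : E) :
    ⟪T x, x⟫_ℝ = ∑ i, μ i * b.repr x i ^ 2 := by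
  have hTx : T x = ∑ i, (b.repr x i * μ i) • b i := by
    conv_lhs => rw [← b.sum_repr x]
    simp only [map_sum, map_smul, hT, smul_smul]
  simp only [hTx, sum_inner, real_inner_smul_left, ← b.repr_apply_apply]
  exact sum_congr rfl fun i _ => by ring

theorem OrthonormalBasis.repr_eq_zero_of_mem_span_image {s : Set ι} {x : E}
    (hx : x ∈ span ℝ (b '' s)) {i : ι} (hi : i ∉ s) : b.repr x i = 0 := by
  rw [← b.coe_toBasis, Basis.mem_span_image] at hx
  rw [← b.coe_toBasis_repr_apply]
  exact Finsupp.notMem_support_iff.mp fun h => hi (hx h)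

theorem OrthonormalBasis.finrank_span_image (s : Finset ι) :
    finrank ℝ (span ℝ (b '' s)) = #s := by
  rw [Set.image_eq_range, finrank_span_eq_card (b := fun i : (s : Set ι) => b i)
    (b.orthonormal.linearIndependent.comp _ Subtype.val_injective)]
  simp

theorem OrthonormalBasis.inner_map_self_le_of_mem_span (hT : ∀ i, T (b i) = μ i • b i)
    {s : Set ι} {c : ℝ} (hμ : ∀ i ∈ s, μ i ≤ c) {x : E} (hx : x ∈ span ℝ (b '' s)) :
    ⟪T x, x⟫_ℝ ≤ c * ‖x‖ ^ 2 := by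
  rw [b.inner_map_self_eq_sum hT, b.norm_sq_eq_sum_repr_sq, mul_sum]
  refine sum_le_sum fun i _ => ?_
  by_cases hi : i ∈ s
  · exact mul_le_mul_of_nonneg_right (hμ i hi) (sq_nonneg _)
  · simp [b.repr_eq_zero_of_mem_span_image hx hi]

theorem OrthonormalBasis.le_inner_map_self_of_mem_span (hT : ∀ i, T (b i) = μ i • b i)
    {s : Set ι} {c : ℝ} (hμ : ∀ i ∈ s, c ≤ μ i) {x : E} (hx : x ∈ span ℝ (b '' s)) :
    c * ‖x‖ ^ 2 ≤ ⟪T x, x⟫_ℝ := by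
  rw [b.inner_map_self_eq_sum hT, b.norm_sq_eq_sum_repr_sq, mul_sum]
  refine sum_le_sum fun i _ => ?_
  by_cases hi : i ∈ s
  · exact mul_le_mul_of_nonneg_right (hμ i hi) (sq_nonneg _)
  · simp [b.repr_eq_zero_of_mem_span_image hx hi]

end Rayleigh

theorem Submodule.exists_ne_zero_mem_map_mem_of_finrank_lt {K V W : Type*} [Field K]
    [AddCommGroup V] [Module K V] [AddCommGroup W] [Module K W] [FiniteDimensional K W]
    {f : V →ₗ[K] W} (hf : Function.Injective f) {P : Submodule K V} {Q : Submodule K W}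
    [FiniteDimensional K P] (h : finrank K W < finrank K P + finrank K Q) :
    ∃ y ∈ P, y ≠ 0 ∧ f y ∈ Q := by
  have hP : finrank K (P.map f) = finrank K P :=
    (equivMapOfInjective f hf P).finrank_eq.symm
  have hsup := (P.map f ⊔ Q).finrank_le
  have hinf : P.map f ⊓ Q ≠ ⊥ := by
    intro hbot
    have := finrank_sup_add_finrank_inf_eq (P.map f) Q
    rw [hbot, finrank_bot] at this
    omega
  obtain ⟨x, hx, hx0⟩ := exists_mem_ne_zero_of_ne_bot hinf
  obtain ⟨⟨y, hyP, rfl⟩, hxQ⟩ := mem_inf.mp hx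
  exact ⟨y, hyP, fun hy => hx0 (by simp [hy]), hxQ⟩

section Interlacing

variable {ι κ E F : Type*} [Fintype ι] [Fintype κ]
  [NormedAddCommGroup E] [InnerProductSpace ℝ E] [NormedAddCommGroup F] [InnerProductSpace ℝ F]
  (bE : OrthonormalBasis ι ℝ E) (bF : OrthonormalBasis κ ℝ F)
  {S : E →ₗ[ℝ] E} {T : F →ₗ[ℝ] F} {μ : ι → ℝ} {ν : κ → ℝ}
  [FiniteDimensional ℝ E] [FiniteDimensional ℝ F] (V : F →ₗᵢ[ℝ] E)

theorem le_compression_of_finrank_lt (hS : ∀ i, S (bE i) = μ i • bE i)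
    (hT : ∀ j, T (bF j) = ν j • bF j)
    (hSVT : ∀ y, ⟪S (V y), V y⟫_ℝ = ⟪T y, y⟫_ℝ) {s : Finset κ} {t : Finset ι}
    (hst : finrank ℝ E < #s + #t) {c d : ℝ} (hν : ∀ j ∈ s, ν j ≤ c)
    (hμ : ∀ i ∈ t, d ≤ μ i) : d ≤ c := by
  obtain ⟨y, hys, hy0, hVyt⟩ := exists_ne_zero_mem_map_mem_of_finrank_lt V.injective
    (by rwa [bF.finrank_span_image, bE.finrank_span_image])
  refine le_of_mul_le_mul_right ?_ (pow_pos (norm_pos_iff.mpr hy0) 2)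
  calc d * ‖y‖ ^ 2 = d * ‖V y‖ ^ 2 := by rw [V.norm_map]
    _ ≤ ⟪S (V y), V y⟫_ℝ := bE.le_inner_map_self_of_mem_span hS hμ hVyt
    _ = ⟪T y, y⟫_ℝ := hSVT y
    _ ≤ c * ‖y‖ ^ 2 := bF.inner_map_self_le_of_mem_span hT hν hys

theorem compression_le_of_finrank_lt (hS : ∀ i, S (bE i) = μ i • bE i)
    (hT : ∀ j, T (bF j) = ν j • bF j)
    (hSVT : ∀ y, ⟪S (V y), V y⟫_ℝ = ⟪T y, y⟫_ℝ) {s : Finset κ} {t : Finset ι}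
    (hst : finrank ℝ E < #s + #t) {c d : ℝ} (hν : ∀ j ∈ s, c ≤ ν j)
    (hμ : ∀ i ∈ t, μ i ≤ d) : c ≤ d := by
  have := le_compression_of_finrank_lt bE bF V (S := -S) (T := -T) (μ := -μ) (ν := -ν)
    (fun i => by simp [hS, neg_smul]) (fun j => by simp [hT, neg_smul])
    (fun y => by simp [inner_neg_left, hSVT]) hst (c := -c) (d := -d)
    (fun j hj => neg_le_neg (hν j hj)) (fun i hi => neg_le_neg (hμ i hi))
  exact neg_le_neg_iff.mp this

end Interlacing

namespace Matrix

variable {m n : Type*} [Fintype m] [DecidableEq m] [Fintype n] [DecidableEq n]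

theorem IsHermitian.toEuclideanLin_eigenvectorBasis {𝕜 : Type*} [RCLike 𝕜] {A : Matrix n n 𝕜}
    (hA : A.IsHermitian) (j : n) :
    toEuclideanLin A (hA.eigenvectorBasis j) = hA.eigenvalues j • hA.eigenvectorBasis j :=
  WithLp.ofLp_injective _ (hA.mulVec_eigenvectorBasis j)

theorem inner_toEuclideanLin_transpose (M : Matrix m n ℝ) (x : EuclideanSpace ℝ n)
    (y : EuclideanSpace ℝ m) : ⟪x, toEuclideanLin Mᵀ y⟫_ℝ = ⟪toEuclideanLin M x, y⟫_ℝ := by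
  rw [← conjTranspose_eq_transpose_of_trivial, toEuclideanLin_conjTranspose_eq_adjoint,
    LinearMap.adjoint_inner_right]

theorem inner_toEuclideanLin_transpose_mul_mul_self (A : Matrix m m ℝ) (U : Matrix m n ℝ)
    (y : EuclideanSpace ℝ n) :
    ⟪toEuclideanLin (Uᵀ * A * U) y, y⟫_ℝ =
      ⟪toEuclideanLin A (toEuclideanLin U y), toEuclideanLin U y⟫_ℝ := by
  rw [toLpLin_mul_same, toLpLin_mul_same, LinearMap.comp_apply, LinearMap.comp_apply,
    real_inner_comm, inner_toEuclideanLin_transpose, real_inner_comm]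

noncomputable def toEuclideanIsometry (U : Matrix m n ℝ) (hU : Uᵀ * U = 1) :
    EuclideanSpace ℝ n →ₗᵢ[ℝ] EuclideanSpace ℝ m :=
  (toEuclideanLin U).isometryOfInner fun x y => by
    rw [← inner_toEuclideanLin_transpose, ← LinearMap.comp_apply, ← toLpLin_mul_same, hU]
    simp

end Matrix

theorem stmt5 {n r : ℕ} (hr : r < n)
    (A : Matrix (Fin n) (Fin n) ℝ) (hA : A.IsHermitian)
    (U : Matrix (Fin n) (Fin r) ℝ) (hU : Uᵀ * U = 1)
    (hB : (Uᵀ * A * U).IsHermitian)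
    (lamA : Fin n → ℝ) (hlamA : Monotone lamA)
    (σA : Equiv.Perm (Fin n)) (hσA : lamA = hA.eigenvalues ∘ σA)
    (lamB : Fin r → ℝ) (hlamB : Monotone lamB)
    (σB : Equiv.Perm (Fin r)) (hσB : lamB = hB.eigenvalues ∘ σB) :
    ∀ k : Fin r, lamA (Fin.castLE hr.le k) ≤ lamB k ∧
      lamB k ≤ lamA ⟨(k : ℕ) + (n - r), by have := k.isLt; omega⟩ := by
  intro k
  set bA := hA.eigenvectorBasis.reindex σA.symm
  set bB := hB.eigenvectorBasis.reindex σB.symm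
  have hbA : ∀ i, toEuclideanLin A (bA i) = lamA i • bA i := fun i => by
    simpa [bA, hσA] using hA.toEuclideanLin_eigenvectorBasis (σA i)
  have hbB : ∀ j, toEuclideanLin (Uᵀ * A * U) (bB j) = lamB j • bB j := fun j => by
    simpa [bB, hσB] using hB.toEuclideanLin_eigenvectorBasis (σB j)
  set V := toEuclideanIsometry U hU
  have hAB : ∀ y, ⟪toEuclideanLin A (V y), V y⟫_ℝ = ⟪toEuclideanLin (Uᵀ * A * U) y, y⟫_ℝ :=
    fun y => (inner_toEuclideanLin_transpose_mul_mul_self A U y).symm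
  have hk := k.isLt
  constructor
  · refine le_compression_of_finrank_lt bA bB V hbA hbB hAB (s := Iic k)
      (t := Ici (Fin.castLE hr.le k)) ?_ (fun j hj => hlamB (mem_Iic.mp hj))
      (fun i hi => hlamA (mem_Ici.mp hi))
    simp only [finrank_euclideanSpace_fin, Fin.card_Iic, Fin.card_Ici, Fin.val_castLE]
    omega
  · refine compression_le_of_finrank_lt bA bB V hbA hbB hAB (s := Ici k)
      (t := Iic ⟨k + (n - r), by omega⟩) ?_ (fun j hj => hlamB (mem_Ici.mp hj))
      (fun i hi => hlamA (mem_Iic.mp hi))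
    simp only [finrank_euclideanSpace_fin, Fin.card_Iic, Fin.card_Ici]
    omega
end
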